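/- Let M be an enhanced multi-pushdown system, φ a Multi-CaRet(M) formula of the simplified language, and M̂, 𝓕, I_0, γ, Π as constructed from M, an initial state (g_0, i_0) and φ. If ρ2 is an infinite run of M̂ satisfying 𝓕 that starts from a configuration whose global state belongs to I_0, then ρ1 = Π(ρ2) is an infinite run of M, and moreover: (A) for every k ≥ 0, ρ1 is k-bounded iff ρ2 is k-bounded; (B) for every k ≥ 0, ρ1 is k-phase-bounded iff ρ2 is k-phase-bounded; (C) for every total ordering ≼ of [N], ρ1 is ≼-bounded iff ρ2 is ≼-bounded. -/

import Mathlib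

attribute [local instance] Classical.propDecidable

/-- Actions modifying a stack with alphabet `Γ`:
`call b` pushes `b`, `ret b` pops the top letter (which must be `b`),
`internal b` replaces the top letter by `b`. -/
inductive MPSAction (Γ : Type*) : Type _
  | call : Γ → MPSAction Γ
  | ret : Γ → MPSAction Γ
  | internal : Γ → MPSAction Γ

/-- The kind of an action. -/
inductive AKind : Type
  | call : AKind
  | ret : AKind
  | internal : AKind
deriving DecidableEq

namespace MPSAction

def kind {Γ : Type*} : MPSAction Γ → AKind
  | .call _ => .call
  | .ret _ => .ret
  | .internal _ => .internal

def letter {Γ : Type*} : MPSAction Γ → Γ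
  | .call b => b
  | .ret b => b
  | .internal b => b

def mapLetter {Γ Γ' : Type*} (f : Γ → Γ') : MPSAction Γ → MPSAction Γ'
  | .call b => .call (f b)
  | .ret b => .ret (f b)
  | .internal b => .internal (f b)

end MPSAction

/-- A multi-pushdown system with `N` stacks, global states `G` and stack alphabet `Γ`:
for each stack `s`, a transition relation `Δ s ⊆ G × Γ × G × 𝔄(Γ)`. -/
structure MPS (G Γ : Type*) (N : ℕ) : Type _ where
  Δ : Fin N → Set (G × Γ × G × MPSAction Γ)

/-- A configuration: a global state together with the contents of the `N` stacks
(a stack is a list whose head is the top). -/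
abbrev MPSConfig (G Γ : Type*) (N : ℕ) := G × (Fin N → List Γ)

/-- One-step relation with respect to the `s`-th stack. -/
def MPS.Step {G Γ : Type*} {N : ℕ} (M : MPS G Γ N) (s : Fin N)
    (c c' : MPSConfig G Γ N) : Prop :=
  ∃ (a : Γ) (rest : List Γ) (act : MPSAction Γ),
    c.2 s = a :: rest ∧
    (c.1, a, c'.1, act) ∈ M.Δ s ∧
    (∀ j : Fin N, j ≠ s → c'.2 j = c.2 j) ∧
    (match act with
      | .ret b => b = a ∧ c'.2 s = rest
      | .internal b => c'.2 s = b :: rest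
      | .call b => c'.2 s = b :: a :: rest)

/-- The standard constraint that the bottom letter `bot` is never pushed, popped,
or replaced by another symbol. -/
def MPS.BotOK {G Γ : Type*} {N : ℕ} (M : MPS G Γ N) (bot : Γ) : Prop :=
  ∀ s : Fin N, ∀ x ∈ M.Δ s,
    (match x.2.2.2 with
      | MPSAction.call b => b ≠ bot
      | MPSAction.ret b => b ≠ bot
      | MPSAction.internal b => (x.2.1 = bot ↔ b = bot))

/-- An infinite sequence of configurations together with the sequence of active stacks. -/
structure MPSTrace (G Γ : Type*) (N : ℕ) : Type _ where
  conf : ℕ → MPSConfig G Γ N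
  stk : ℕ → Fin N

/-- `ρ` is an infinite run of `M`: at each step `t` the active stack is `ρ.stk t`. -/
def MPS.IsRun {G Γ : Type*} {N : ℕ} (M : MPS G Γ N) (ρ : MPSTrace G Γ N) : Prop :=
  ∀ t : ℕ, M.Step (ρ.stk t) (ρ.conf t) (ρ.conf (t + 1))

/-- An enhanced multi-pushdown system: the global states are pairs `(g, s)` and every
transition of `Δ s` starts in a global state whose second component is `s`, so the global
state determines the active stack of the next step. -/
def MPS.Enhanced {G Γ : Type*} {N : ℕ} (M : MPS (G × Fin N) Γ N) : Prop :=
  ∀ s : Fin N, ∀ x ∈ M.Δ s, x.1.2 = s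

namespace MPSTrace

variable {G Γ : Type*} {N : ℕ}

/-- Height of the `j`-th stack at position `t`. -/
def height (ρ : MPSTrace G Γ N) (j : Fin N) (t : ℕ) : ℕ := ((ρ.conf t).2 j).length

/-- The step at position `t` is a call (the active stack grows). -/
def IsCallStep (ρ : MPSTrace G Γ N) (t : ℕ) : Prop :=
  ρ.height (ρ.stk t) (t + 1) = ρ.height (ρ.stk t) t + 1

/-- The step at position `t` is internal (the active stack keeps its height). -/
def IsInternalStep (ρ : MPSTrace G Γ N) (t : ℕ) : Prop :=
  ρ.height (ρ.stk t) (t + 1) = ρ.height (ρ.stk t) t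

/-- The step at position `t` is a return (the active stack shrinks). -/
def IsReturnStep (ρ : MPSTrace G Γ N) (t : ℕ) : Prop :=
  ρ.height (ρ.stk t) (t + 1) + 1 = ρ.height (ρ.stk t) t

/-- `t'` is the abstract successor `Succ^{a,s}(t)`: defined only if `s` is active at `t`;
after a call it is the least later position where `s` is active at the same height,
after an internal action the least later position where `s` is active,
and it is undefined after a return. -/
def IsAbsSucc (ρ : MPSTrace G Γ N) (s : Fin N) (t t' : ℕ) : Prop :=
  ρ.stk t = s ∧
  ((ρ.IsCallStep t ∧ t < t' ∧ ρ.stk t' = s ∧ ρ.height s t' = ρ.height s t ∧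
      ∀ u, t < u → u < t' → ¬(ρ.stk u = s ∧ ρ.height s u = ρ.height s t)) ∨
   (ρ.IsInternalStep t ∧ t < t' ∧ ρ.stk t' = s ∧
      ∀ u, t < u → u < t' → ρ.stk u ≠ s))

/-- `t'` is the caller successor `Succ^{c,s}(t)`: the greatest position `t' < t`
where `s` is active with height one less than the height of `s` at `t`. -/
def IsCallerSucc (ρ : MPSTrace G Γ N) (s : Fin N) (t t' : ℕ) : Prop :=
  t' < t ∧ ρ.stk t' = s ∧ ρ.height s t' + 1 = ρ.height s t ∧
  ∀ u, t' < u → u < t → ¬(ρ.stk u = s ∧ ρ.height s u + 1 = ρ.height s t)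

/-- `k`-bounded runs: there are at most `k - 1` positions where a context switch occurs. -/
def KBounded (ρ : MPSTrace G Γ N) (k : ℕ) : Prop :=
  ∃ f : Fin (k - 1) → ℕ, ∀ t : ℕ, t ∉ Set.range f → ρ.stk t = ρ.stk (t + 1)

/-- `k`-phase-bounded runs: `ℕ` can be partitioned into `α ≤ k` classes such that within
each class all return actions are performed on a single stack. -/
def KPhaseBounded (ρ : MPSTrace G Γ N) (k : ℕ) : Prop :=
  ∃ (α : ℕ) (c : ℕ → Fin α), α ≤ k ∧
    ∀ b : Fin α, ∃ s : Fin N, ∀ i : ℕ, c i = b → ρ.IsReturnStep i → ρ.stk i = s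

/-- `≼`-bounded runs for a total ordering `le` of the stacks: whenever a return is
performed on a stack, every strictly smaller stack contains only bottom letters. -/
def OrderBounded (ρ : MPSTrace G Γ N) (isBot : Γ → Prop)
    (le : Fin N → Fin N → Prop) : Prop :=
  ∀ t : ℕ, ρ.IsReturnStep t → ∀ j : Fin N, le j (ρ.stk t) → j ≠ ρ.stk t →
    ∀ a ∈ (ρ.conf t).2 j, isBot a

end MPSTrace
/-- Formulae of the simplified Multi-CaRet language: atomic formulas are pairs `(g, s)`
together with `call`, `return`, `internal`. -/
inductive SForm (G : Type*) (N : ℕ) : Type _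
  | atom : G → Fin N → SForm G N
  | call : SForm G N
  | ret : SForm G N
  | internal : SForm G N
  | or : SForm G N → SForm G N → SForm G N
  | not : SForm G N → SForm G N
  | next : SForm G N → SForm G N
  | untl : SForm G N → SForm G N → SForm G N
  | anext : Fin N → SForm G N → SForm G N
  | auntl : Fin N → SForm G N → SForm G N → SForm G N
  | cnext : Fin N → SForm G N → SForm G N
  | cuntl : Fin N → SForm G N → SForm G N → SForm G N

/-- Satisfaction relation `ρ, t ⊨ ψ` for the simplified Multi-CaRet language over a trace
of an enhanced multi-pushdown system. -/
def SatS {G Γ : Type*} {N : ℕ} (ρ : MPSTrace (G × Fin N) Γ N) :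
    SForm G N → ℕ → Prop
  | .atom g s, t => (ρ.conf t).1.1 = g ∧ ρ.stk t = s
  | .call, t => ρ.IsCallStep t
  | .ret, t => ρ.IsReturnStep t
  | .internal, t => ρ.IsInternalStep t
  | .or ψ1 ψ2, t => SatS ρ ψ1 t ∨ SatS ρ ψ2 t
  | .not ψ, t => ¬ SatS ρ ψ t
  | .next ψ, t => SatS ρ ψ (t + 1)
  | .untl ψ1 ψ2, t => ∃ u : ℕ, t ≤ u ∧ SatS ρ ψ2 u ∧ ∀ v, t ≤ v → v < u → SatS ρ ψ1 v
  | .anext s ψ, t => ∃ t' : ℕ, ρ.IsAbsSucc s t t' ∧ SatS ρ ψ t'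
  | .auntl s ψ1 ψ2, t =>
      ∃ (k : ℕ) (i : ℕ → ℕ),
        (t ≤ i 0 ∧ ρ.stk (i 0) = s ∧ ∀ u, t ≤ u → u < i 0 → ρ.stk u ≠ s) ∧
        (∀ j, j < k → ρ.IsAbsSucc s (i j) (i (j + 1))) ∧
        (∀ j, j < k → SatS ρ ψ1 (i j)) ∧ SatS ρ ψ2 (i k)
  | .cnext s ψ, t => ∃ t' : ℕ, ρ.IsCallerSucc s t t' ∧ SatS ρ ψ t'
  | .cuntl s ψ1 ψ2, t =>
      ∃ (k : ℕ) (i : ℕ → ℕ),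
        (i 0 ≤ t ∧ ρ.stk (i 0) = s ∧ ∀ u, i 0 < u → u ≤ t → ρ.stk u ≠ s) ∧
        (∀ j, j < k → ρ.IsCallerSucc s (i j) (i (j + 1))) ∧
        (∀ j, j < k → SatS ρ ψ1 (i j)) ∧ SatS ρ ψ2 (i k)

/-- The closure `Cl(φ)`: the least set of formulas containing `φ` and all atomic pairs
`(g, s)`, closed under subformulas, under adding `X(ψ1 U ψ2)` for until formulas,
`X^b_s (ψ1 U^b_s ψ2)` for parameterized until formulas, and under single negations. -/
inductive InCl {G : Type*} {N : ℕ} (φ : SForm G N) : SForm G N → Prop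
  | self : InCl φ φ
  | atom (g : G) (s : Fin N) : InCl φ (.atom g s)
  | not_sub {ψ : SForm G N} : InCl φ (.not ψ) → InCl φ ψ
  | next_sub {ψ : SForm G N} : InCl φ (.next ψ) → InCl φ ψ
  | anext_sub {s : Fin N} {ψ : SForm G N} : InCl φ (.anext s ψ) → InCl φ ψ
  | cnext_sub {s : Fin N} {ψ : SForm G N} : InCl φ (.cnext s ψ) → InCl φ ψ
  | or_left {ψ1 ψ2 : SForm G N} : InCl φ (.or ψ1 ψ2) → InCl φ ψ1
  | or_right {ψ1 ψ2 : SForm G N} : InCl φ (.or ψ1 ψ2) → InCl φ ψ2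
  | untl_left {ψ1 ψ2 : SForm G N} : InCl φ (.untl ψ1 ψ2) → InCl φ ψ1
  | untl_right {ψ1 ψ2 : SForm G N} : InCl φ (.untl ψ1 ψ2) → InCl φ ψ2
  | untl_next {ψ1 ψ2 : SForm G N} : InCl φ (.untl ψ1 ψ2) → InCl φ (.next (.untl ψ1 ψ2))
  | auntl_left {s : Fin N} {ψ1 ψ2 : SForm G N} : InCl φ (.auntl s ψ1 ψ2) → InCl φ ψ1
  | auntl_right {s : Fin N} {ψ1 ψ2 : SForm G N} : InCl φ (.auntl s ψ1 ψ2) → InCl φ ψ2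
  | auntl_next {s : Fin N} {ψ1 ψ2 : SForm G N} :
      InCl φ (.auntl s ψ1 ψ2) → InCl φ (.anext s (.auntl s ψ1 ψ2))
  | cuntl_left {s : Fin N} {ψ1 ψ2 : SForm G N} : InCl φ (.cuntl s ψ1 ψ2) → InCl φ ψ1
  | cuntl_right {s : Fin N} {ψ1 ψ2 : SForm G N} : InCl φ (.cuntl s ψ1 ψ2) → InCl φ ψ2
  | cuntl_next {s : Fin N} {ψ1 ψ2 : SForm G N} :
      InCl φ (.cuntl s ψ1 ψ2) → InCl φ (.cnext s (.cuntl s ψ1 ψ2))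
  | neg {ψ : SForm G N} : InCl φ ψ → (∀ χ : SForm G N, ψ ≠ .not χ) → InCl φ (.not ψ)

/-- An atom of `φ`: a subset of `Cl(φ)` that is locally consistent for negation,
disjunction and until, and contains exactly one atomic pair `(g, s)`. -/
def IsAtomOf {G : Type*} {N : ℕ} (φ : SForm G N) (A : Set (SForm G N)) : Prop :=
  (∀ ψ ∈ A, InCl φ ψ) ∧
  (∀ ψ : SForm G N, InCl φ (.not ψ) → (ψ ∈ A ↔ SForm.not ψ ∉ A)) ∧
  (∀ ψ1 ψ2 : SForm G N, InCl φ (.or ψ1 ψ2) →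
    (SForm.or ψ1 ψ2 ∈ A ↔ ψ1 ∈ A ∨ ψ2 ∈ A)) ∧
  (∀ ψ1 ψ2 : SForm G N, InCl φ (.untl ψ1 ψ2) →
    (SForm.untl ψ1 ψ2 ∈ A ↔ ψ2 ∈ A ∨ (ψ1 ∈ A ∧ SForm.next (.untl ψ1 ψ2) ∈ A))) ∧
  (∃! p : G × Fin N, SForm.atom p.1 p.2 ∈ A)

/-- Membership in `Atoms(φ)`: the atoms of `φ` together with the empty set. -/
def IsAtomOrEmpty {G : Type*} {N : ℕ} (φ : SForm G N) (A : Set (SForm G N)) : Prop :=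
  IsAtomOf φ A ∨ A = ∅
/-- Tags recording whether the current call will ever be returned. -/
inductive RTag : Type
  | willreturn : RTag
  | noreturn : RTag
deriving DecidableEq

/-- Tags recording whether a stack is ever active again. -/
inductive DTag : Type
  | alive : DTag
  | dead : DTag
deriving DecidableEq

/-- Global states of the synchronized product `M̂` (without the active-stack component):
a global state of `M`, an atom (or `∅`) per stack, a return tag per stack and a
dead/alive tag per stack. -/
abbrev GHat (G : Type*) (N : ℕ) : Type _ :=
  G × (Fin N → Set (SForm G N)) × (Fin N → RTag) × (Fin N → DTag)

/-- Stack alphabet of the synchronized product `M̂`. -/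
abbrev ΓHat (G Γ : Type*) (N : ℕ) : Type _ := Γ × Set (SForm G N) × RTag

/-- Conditions (1)–(19) of Figure 1 defining the transition relation of the
synchronized product `M̂`, together with the requirement that all atom components
belong to `Atoms(φ)` and that the system is enhanced. -/
def HatCond {G Γ : Type*} {N : ℕ} (M : MPS (G × Fin N) Γ N) (φ : SForm G N) (s : Fin N)
    (x : (GHat G N × Fin N) × ΓHat G Γ N × (GHat G N × Fin N) × MPSAction (ΓHat G Γ N)) :
    Prop :=
  match x with
  | (((g, A, r, d), s₀), (a, aA, ar), ((g', A', r', d'), s'), act) =>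
    s₀ = s ∧
    (∀ j, IsAtomOrEmpty φ (A j)) ∧ (∀ j, IsAtomOrEmpty φ (A' j)) ∧
    IsAtomOrEmpty φ aA ∧ IsAtomOrEmpty φ act.letter.2.1 ∧
    -- (1) the projected transition belongs to M
    ((g, s), a, (g', s'), act.mapLetter Prod.fst) ∈ M.Δ s ∧
    -- (2)
    d s = DTag.alive ∧
    -- (3)
    (∀ j, j ≠ s → d' j = d j) ∧
    -- (4)
    (act.kind = AKind.call →
      (r s = RTag.willreturn → r' s = RTag.willreturn) ∧ act.letter.2.2 = r s) ∧
    -- (5)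
    (act.kind = AKind.internal → r' s = r s ∧ act.letter.2.2 = ar) ∧
    -- (6)
    (act.kind = AKind.ret → r s = RTag.willreturn ∧ r' s = ar) ∧
    -- (7)
    (∀ j, j ≠ s → r' j = r j) ∧
    -- (8)
    SForm.atom g s ∈ A s ∧
    -- (9)
    (∀ j, j ≠ s → A' j = A j) ∧
    -- (10)
    (∀ ψ, SForm.next ψ ∈ A s → ψ ∈ A' s') ∧
    -- (11)
    (act.kind = AKind.call → act.letter.2.1 = A s) ∧
    -- (12)
    (act.kind = AKind.internal →
      (∀ ψ, SForm.anext s ψ ∈ A s → ψ ∈ A' s) ∧ act.letter.2.1 = aA) ∧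
    -- (13)
    (act.kind = AKind.ret → ∀ ψ, SForm.anext s ψ ∈ aA → ψ ∈ A' s) ∧
    -- (14)
    (((act.kind = AKind.call ∧ r s = RTag.noreturn) ∨ act.kind = AKind.ret ∨
        d' s = DTag.dead) → ∀ ψ, SForm.anext s ψ ∉ A s) ∧
    -- (15)
    (act.kind = AKind.call → ∀ ψ, InCl φ (SForm.cnext s ψ) →
      (SForm.cnext s ψ ∈ A' s' ↔ ψ ∈ A s)) ∧
    -- (16)
    (act.kind = AKind.internal → ∀ ψ,
      (SForm.cnext s ψ ∈ A' s' ↔ SForm.cnext s ψ ∈ A s)) ∧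
    -- (17)
    (∀ ψ1 ψ2, InCl φ (SForm.auntl s ψ1 ψ2) →
      (SForm.auntl s ψ1 ψ2 ∈ A s ↔
        ψ2 ∈ A s ∨ (ψ1 ∈ A s ∧ SForm.anext s (SForm.auntl s ψ1 ψ2) ∈ A s))) ∧
    (∀ ψ1 ψ2, InCl φ (SForm.cuntl s ψ1 ψ2) →
      (SForm.cuntl s ψ1 ψ2 ∈ A s ↔
        ψ2 ∈ A s ∨ (ψ1 ∈ A s ∧ SForm.cnext s (SForm.cuntl s ψ1 ψ2) ∈ A s))) ∧
    -- (18)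
    (∀ j, j ≠ s → ∀ ψ1 ψ2, InCl φ (SForm.auntl j ψ1 ψ2) →
      (SForm.auntl j ψ1 ψ2 ∈ A s ↔ SForm.auntl j ψ1 ψ2 ∈ A' s)) ∧
    (∀ j, j ≠ s → ∀ ψ1 ψ2, InCl φ (SForm.cuntl j ψ1 ψ2) →
      (SForm.cuntl j ψ1 ψ2 ∈ A s ↔ SForm.cuntl j ψ1 ψ2 ∈ A' s)) ∧
    -- (19)
    (∀ j, d j = DTag.dead → A j = ∅ ∧ r j = RTag.noreturn)

/-- The synchronized product `M̂` built from `M` and `φ`. -/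
def MhatSys {G Γ : Type*} {N : ℕ} (M : MPS (G × Fin N) Γ N) (φ : SForm G N) :
    MPS (GHat G N × Fin N) (ΓHat G Γ N) N where
  Δ s := {x | HatCond M φ s x}

/-- A global state occurs at infinitely many positions of a trace. -/
def InfOcc {Gs Γs : Type*} {N : ℕ} (ρ : MPSTrace Gs Γs N) (g : Gs) : Prop :=
  ∀ n : ℕ, ∃ t : ℕ, n ≤ t ∧ (ρ.conf t).1 = g

/-- The generalized Büchi acceptance condition `𝓕`: for every set `F ∈ 𝓕`
(of kinds `F¹_ψ`, `F²_ψ`, `F³_j`, `F⁴_j`) some global state of `F` occurs at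
infinitely many positions of the trace. -/
def SatisfiesF {G Γ : Type*} {N : ℕ} (φ : SForm G N)
    (rh : MPSTrace (GHat G N × Fin N) (ΓHat G Γ N) N) : Prop :=
  (∀ ψ1 ψ2 : SForm G N, InCl φ (.untl ψ1 ψ2) →
    ∃ gh : GHat G N × Fin N, InfOcc rh gh ∧
      (ψ2 ∈ gh.1.2.1 gh.2 ∨ SForm.untl ψ1 ψ2 ∉ gh.1.2.1 gh.2)) ∧
  (∀ (i : Fin N) (ψ1 ψ2 : SForm G N), InCl φ (.auntl i ψ1 ψ2) →
    ∃ gh : GHat G N × Fin N, InfOcc rh gh ∧ gh.1.2.2.1 i = RTag.noreturn ∧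
      (ψ2 ∈ gh.1.2.1 i ∨ SForm.auntl i ψ1 ψ2 ∉ gh.1.2.1 i)) ∧
  (∀ j : Fin N, ∃ gh : GHat G N × Fin N, InfOcc rh gh ∧
      (gh.2 = j ∨ gh.1.2.2.2 j = DTag.dead)) ∧
  (∀ j : Fin N, ∃ gh : GHat G N × Fin N, InfOcc rh gh ∧
      (gh.1.2.2.2 j = DTag.dead ∨ (gh.2 = j ∧ gh.1.2.2.1 j = RTag.noreturn)))

/-- Dead/alive tag of stack `j` at position `t` of the augmented run:
`dead` iff `j` is never active at or after `t`. -/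
noncomputable def dtagAt {G Γ : Type*} {N : ℕ} (ρ : MPSTrace (G × Fin N) Γ N)
    (t : ℕ) (j : Fin N) : DTag :=
  if ∃ t' : ℕ, t ≤ t' ∧ ρ.stk t' = j then DTag.alive else DTag.dead

/-- Return tag of stack `j` at position `t` of the augmented run:
`willreturn` iff the stack is alive and its height eventually drops strictly
below its current height. -/
noncomputable def rtagAt {G Γ : Type*} {N : ℕ} (ρ : MPSTrace (G × Fin N) Γ N)
    (t : ℕ) (j : Fin N) : RTag :=
  if (∃ t' : ℕ, t ≤ t' ∧ ρ.stk t' = j) ∧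
     (∃ t' : ℕ, t ≤ t' ∧ ρ.height j t' < ρ.height j t)
  then RTag.willreturn else RTag.noreturn

/-- Atom of stack `j` at position `t` of the augmented run: the closure formulas that
hold at the least position `t' ≥ t` where `j` is active (and `∅` if there is none). -/
def atomAt {G Γ : Type*} {N : ℕ} (φ : SForm G N) (ρ : MPSTrace (G × Fin N) Γ N)
    (t : ℕ) (j : Fin N) : Set (SForm G N) :=
  {ψ | InCl φ ψ ∧ ∃ t' : ℕ,
    (t ≤ t' ∧ ρ.stk t' = j ∧ ∀ u, t ≤ u → u < t' → ρ.stk u ≠ j) ∧ SatS ρ ψ t'}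

/-- `pushTime ρ j t k`: the greatest position `t' ≤ t` at which the `j`-th stack had
height `k - 1` (the moment the `k`-th letter from the bottom was pushed); by
convention `0` for the bottom letter (`k ≤ 1`). -/
noncomputable def pushTime {G Γ : Type*} {N : ℕ} (ρ : MPSTrace (G × Fin N) Γ N)
    (j : Fin N) (t k : ℕ) : ℕ :=
  if k ≤ 1 then 0 else Nat.findGreatest (fun t' => ρ.height j t' = k - 1) t

/-- Content of the `j`-th stack at position `t` of the augmented run: each letter is
augmented with the atom and return tag recorded at the time the letter was pushed. -/
noncomputable def gammaStack {G Γ : Type*} {N : ℕ} (φ : SForm G N)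
    (ρ : MPSTrace (G × Fin N) Γ N) (t : ℕ) (j : Fin N) : List (ΓHat G Γ N) :=
  List.ofFn (fun i : Fin ((ρ.conf t).2 j).length =>
    (((ρ.conf t).2 j).get i,
     atomAt φ ρ (pushTime ρ j t (((ρ.conf t).2 j).length - i.val)) j,
     rtagAt ρ (pushTime ρ j t (((ρ.conf t).2 j).length - i.val)) j))

/-- The augmentation map `γ` sending a run of `M` to the corresponding augmented run. -/
noncomputable def gammaTrace {G Γ : Type*} {N : ℕ} (φ : SForm G N)
    (ρ : MPSTrace (G × Fin N) Γ N) :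
    MPSTrace (GHat G N × Fin N) (ΓHat G Γ N) N where
  conf t :=
    ((((ρ.conf t).1.1,
       fun j => atomAt φ ρ t j,
       fun j => rtagAt ρ t j,
       fun j => dtagAt ρ t j), ρ.stk t),
     fun j => gammaStack φ ρ t j)
  stk := ρ.stk

/-- The erasing projection `Π` removing all augmentations from global states and
stack letters. -/
def projTrace {G Γ : Type*} {N : ℕ}
    (rh : MPSTrace (GHat G N × Fin N) (ΓHat G Γ N) N) :
    MPSTrace (G × Fin N) Γ N where
  conf t := (((rh.conf t).1.1.1, (rh.conf t).1.2),
             fun j => ((rh.conf t).2 j).map Prod.fst)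
  stk := rh.stk

/-- The set `I₀` of initial global states of `M̂` associated with an initial state
`(g₀, i₀)` of `M` and the formula `φ`. -/
def I0set {G : Type*} {N : ℕ} (φ : SForm G N) (g0 : G) (i0 : Fin N) :
    Set (GHat G N × Fin N) :=
  {gh | gh.1.1 = g0 ∧ gh.2 = i0 ∧ φ ∈ gh.1.2.1 i0 ∧ ∀ j, IsAtomOrEmpty φ (gh.1.2.1 j)}

/-! Condition (1) of `M̂` says that every transition of `M̂` projects to a transition of `M`,
so `Π` maps runs of `M̂` to runs of `M`. Moreover `Π` keeps the active stack and the height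
of every stack at every position, and the three boundedness notions only depend on these and
on which letters are `⊥`; hence a run of `M̂` and its projection satisfy the same ones. -/

def MPSConfig.map {G Γ G' Γ' : Type*} {N : ℕ} (f : G → G') (g : Γ → Γ')
    (c : MPSConfig G Γ N) : MPSConfig G' Γ' N :=
  (f c.1, fun j => (c.2 j).map g)

namespace MPSTrace

variable {G Γ G' Γ' : Type*} {N : ℕ}

def map (f : G → G') (g : Γ → Γ') (ρ : MPSTrace G Γ N) : MPSTrace G' Γ' N where
  conf t := MPSConfig.map f g (ρ.conf t)
  stk := ρ.stk

variable (f : G → G') (g : Γ → Γ') (ρ : MPSTrace G Γ N)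

@[simp]
theorem height_map (j : Fin N) (t : ℕ) : (ρ.map f g).height j t = ρ.height j t :=
  List.length_map _

theorem isReturnStep_map_iff (t : ℕ) : (ρ.map f g).IsReturnStep t ↔ ρ.IsReturnStep t := by
  simp only [IsReturnStep, height_map]
  rfl

theorem kBounded_map_iff (k : ℕ) : (ρ.map f g).KBounded k ↔ ρ.KBounded k :=
  Iff.rfl

theorem kPhaseBounded_map_iff (k : ℕ) : (ρ.map f g).KPhaseBounded k ↔ ρ.KPhaseBounded k := by
  simp only [KPhaseBounded, isReturnStep_map_iff]
  rfl

theorem orderBounded_map_iff (isBot : Γ' → Prop) (le : Fin N → Fin N → Prop) :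
    (ρ.map f g).OrderBounded isBot le ↔ ρ.OrderBounded (isBot ∘ g) le := by
  simp only [OrderBounded, isReturnStep_map_iff]
  refine forall₃_congr fun t _ j => forall₂_congr fun _ _ => ?_
  exact List.forall_mem_map

end MPSTrace

section Simulation

variable {G Γ G' Γ' : Type*} {N : ℕ} {M : MPS G Γ N} {M' : MPS G' Γ' N}
  {f : G → G'} {g : Γ → Γ'}

theorem MPS.Step.map
    (hΔ : ∀ s, ∀ x ∈ M.Δ s, (f x.1, g x.2.1, f x.2.2.1, x.2.2.2.mapLetter g) ∈ M'.Δ s)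
    {s : Fin N} {c c' : MPSConfig G Γ N} (h : M.Step s c c') :
    M'.Step s (MPSConfig.map f g c) (MPSConfig.map f g c') := by
  obtain ⟨a, rest, act, htop, hmem, hframe, hact⟩ := h
  refine ⟨g a, rest.map g, act.mapLetter g, by simp [MPSConfig.map, htop], hΔ s _ hmem,
    fun j hj => by simp [MPSConfig.map, hframe j hj], ?_⟩
  cases act with
  | call b => simp [MPSConfig.map, MPSAction.mapLetter, hact]
  | ret b => simp [MPSConfig.map, MPSAction.mapLetter, hact.1, hact.2]
  | internal b => simp [MPSConfig.map, MPSAction.mapLetter, hact]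

theorem MPS.IsRun.map
    (hΔ : ∀ s, ∀ x ∈ M.Δ s, (f x.1, g x.2.1, f x.2.2.1, x.2.2.2.mapLetter g) ∈ M'.Δ s)
    {ρ : MPSTrace G Γ N} (h : M.IsRun ρ) : M'.IsRun (ρ.map f g) :=
  fun t => (h t).map hΔ

end Simulation

theorem MhatSys.proj_mem_Δ {G Γ : Type*} {N : ℕ} {M : MPS (G × Fin N) Γ N} {φ : SForm G N}
    {s : Fin N} {x} (hx : x ∈ (MhatSys M φ).Δ s) :
    ((x.1.1.1, x.1.2), x.2.1.1, (x.2.2.1.1.1, x.2.2.1.2), x.2.2.2.mapLetter Prod.fst) ∈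
      M.Δ s := by
  obtain ⟨⟨⟨_, _, _, _⟩, _⟩, ⟨_, _, _⟩, ⟨⟨_, _, _, _⟩, _⟩, _⟩ := x
  obtain ⟨rfl, -, -, -, -, hproj, -⟩ := hx
  exact hproj

theorem projTrace_eq_map {G Γ : Type*} {N : ℕ}
    (rh : MPSTrace (GHat G N × Fin N) (ΓHat G Γ N) N) :
    projTrace rh = rh.map (fun gh => (gh.1.1, gh.2)) Prod.fst :=
  rfl

theorem proj_preserves_boundedness_general {G Γ : Type*} {N : ℕ} (bot : Γ) (M : MPS (G × Fin N) Γ N)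
    (φ : SForm G N) (rh : MPSTrace (GHat G N × Fin N) (ΓHat G Γ N) N)
    (hrun : (MhatSys M φ).IsRun rh) :
    M.IsRun (projTrace rh) ∧
    (∀ k : ℕ, (projTrace rh).KBounded k ↔ rh.KBounded k) ∧
    (∀ k : ℕ, (projTrace rh).KPhaseBounded k ↔ rh.KPhaseBounded k) ∧
    (∀ le : Fin N → Fin N → Prop, IsLinearOrder (Fin N) le →
      ((projTrace rh).OrderBounded (· = bot) le ↔
        rh.OrderBounded (fun a => a.1 = bot) le)) := by
  rw [projTrace_eq_map]
  exact ⟨hrun.map fun _ _ hx => MhatSys.proj_mem_Δ hx, rh.kBounded_map_iff _ _,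
    rh.kPhaseBounded_map_iff _ _, fun le _ => rh.orderBounded_map_iff _ _ _ le⟩

/-- If `rh` is an infinite run of the product `M̂` satisfying `𝓕`
that starts from a configuration whose global state belongs to `I₀`, then its
projection `Π(rh)` is an infinite run of `M`, and moreover: (A) for every `k`,
`Π(rh)` is `k`-bounded iff `rh` is; (B) for every `k`, `Π(rh)` is `k`-phase-bounded
iff `rh` is; and (C) for every total ordering `≼` of the stacks, `Π(rh)` is
`≼`-bounded iff `rh` is. -/
theorem proj_preserves_boundedness {G Γ : Type*} [Fintype G] [Nonempty G] [Fintype Γ]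
    {N : ℕ} (hN : 1 ≤ N) (bot : Γ) (M : MPS (G × Fin N) Γ N) (hM : M.Enhanced)
    (hbot : M.BotOK bot) (φ : SForm G N) (g0 : G) (i0 : Fin N)
    (rh : MPSTrace (GHat G N × Fin N) (ΓHat G Γ N) N)
    (hrun : (MhatSys M φ).IsRun rh) (hacc : SatisfiesF φ rh)
    (hinit : (rh.conf 0).1 ∈ I0set φ g0 i0) :
    M.IsRun (projTrace rh) ∧
    (∀ k : ℕ, (projTrace rh).KBounded k ↔ rh.KBounded k) ∧
    (∀ k : ℕ, (projTrace rh).KPhaseBounded k ↔ rh.KPhaseBounded k) ∧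
    (∀ le : Fin N → Fin N → Prop, IsLinearOrder (Fin N) le →
      ((projTrace rh).OrderBounded (· = bot) le ↔
        rh.OrderBounded (fun a => a.1 = bot) le)) :=
  proj_preserves_boundedness_general bot M φ rh hrun
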